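/- arXiv:1404.4927 — 3 statements merged into one kernel-verified Lean document; each statement's English description precedes it below -/
import Mathlib

section
/- Let y = A·x_S + e where x_S ∈ ℝⁿ is K-sparse with support S, and A satisfies the RIP of order 3K with constant δ_{3K} and of order 4K with constant δ_{4K} < 1. Suppose u^{n-1} is the least-squares solution on an index set U^{n-1} with |U^{n-1}| ≤ 3K, x^{n-1} = H_K(u^{n-1}) with support S^{n-1} ⊆ U^{n-1}, h^n is a set of 2K indices with |(Aᵀ(y − A x^{n-1}))_i| ≥ |(Aᵀ(y − A x^{n-1}))_j| for every i ∈ h^n and j ∉ h^n, and U^n = S^{n-1} ∪ h^n. Then ‖(x_S)_{\overline{U^n}}‖ ≤ ρ_{4K}·‖(x_S)_{\overline{U^{n-1}}}‖ + ( δ_{4K}·√(6(1+δ_{3K}))/(1−δ_{4K}) + √(2(1+δ_{4K})) )·‖e‖. -/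
open Finset

/-- Euclidean norm of a vector. -/
noncomputable def euclNorm {d : ℕ} (x : Fin d → ℝ) : ℝ := Real.sqrt (∑ i, x i ^ 2)

/-- The support of a vector, as a finite set of indices. -/
noncomputable def supp {d : ℕ} (x : Fin d → ℝ) : Finset (Fin d) :=
  Finset.univ.filter (fun i => x i ≠ 0)

/-- `restrict x T` agrees with `x` on `T` and is zero outside `T`. -/
def restrict {d : ℕ} (x : Fin d → ℝ) (T : Finset (Fin d)) : Fin d → ℝ :=
  fun i => if i ∈ T then x i else 0

/-- `A` satisfies the Restricted Isometry Property of order `L` with constant `δ ∈ (0,1)`. -/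
def RIP {m d : ℕ} (A : Matrix (Fin m) (Fin d) ℝ) (L : ℕ) (δ : ℝ) : Prop :=
  0 < δ ∧ δ < 1 ∧
  ∀ x : Fin d → ℝ, (supp x).card ≤ L →
    (1 - δ) * euclNorm x ^ 2 ≤ euclNorm (A.mulVec x) ^ 2 ∧
    euclNorm (A.mulVec x) ^ 2 ≤ (1 + δ) * euclNorm x ^ 2

/-- `u` is the least-squares solution on the index set `U`: it is supported on `U` and
`y - A u` is orthogonal to `A z` whenever `z` is supported on `U`. -/
def LeastSq {m d : ℕ} (A : Matrix (Fin m) (Fin d) ℝ) (y : Fin m → ℝ)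
    (U : Finset (Fin d)) (u : Fin d → ℝ) : Prop :=
  supp u ⊆ U ∧ ∀ z : Fin d → ℝ, supp z ⊆ U →
    ∑ i, (y i - A.mulVec u i) * A.mulVec z i = 0

/-!
Write `a` for the missed energy `‖(x_S)_{\overline{U^{n-1}}}‖` and `Δ = x_S - x^{n-1}`.

* The least-squares residual `A (x_S - u^{n-1}) + e` is orthogonal to the columns indexed by
  `U^{n-1}`, so by RIP the error `w = ‖(x_S - u^{n-1})_{U^{n-1}}‖` satisfies
  `w ≤ δ₄ₖ √(a² + w²) + √(1 + δ₃ₖ) ‖e‖`; solving this implicit inequality gives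
  `w ≤ δ₄ₖ a / √(1 - δ₄ₖ²) + √(1 + δ₃ₖ) ‖e‖ / (1 - δ₄ₖ)`.
* Keeping only the `K` largest entries of `u^{n-1}` loses at most a factor `√3` against any
  `K`-sparse vector, so `‖Δ‖² ≤ a² + 3 w²`.
* `h^n` holds the `2K` largest entries of the proxy `g = Aᵀ (A Δ + e)`, while `g - Δ` is small on
  every `4K`-sparse set by RIP. Exchanging the part of `supp Δ` missed by `h^n` against the part
  of `h^n` outside `supp Δ` gives `‖Δ_{\overline{h^n}}‖ ≤ √2 (δ₄ₖ ‖Δ‖ + √(1 + δ₄ₖ) ‖e‖)`.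

Chaining the three bounds produces the rate `ρ₄ₖ`.
-/

open Matrix

section Basic

variable {d : ℕ}

lemma mem_supp {x : Fin d → ℝ} {i : Fin d} : i ∈ supp x ↔ x i ≠ 0 := by
  simp [supp]

lemma supp_subset_iff {x : Fin d → ℝ} {T : Finset (Fin d)} :
    supp x ⊆ T ↔ ∀ i ∉ T, x i = 0 := by
  simp only [subset_iff, mem_supp]
  exact ⟨fun h i hi => by_contra fun hx => hi (h hx), fun h i hx => by_contra fun hi => hx (h i hi)⟩

lemma supp_sub_subset (x y : Fin d → ℝ) : supp (x - y) ⊆ supp x ∪ supp y := by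
  intro i
  simp only [mem_supp, mem_union, Pi.sub_apply]
  contrapose!
  rintro ⟨hx, hy⟩
  simp [hx, hy]

lemma restrict_apply (x : Fin d → ℝ) (T : Finset (Fin d)) (i : Fin d) :
    restrict x T i = if i ∈ T then x i else 0 := rfl

lemma supp_restrict_subset (x : Fin d → ℝ) (T : Finset (Fin d)) : supp (restrict x T) ⊆ T :=
  supp_subset_iff.2 fun i hi => by simp [restrict_apply, hi]

lemma supp_restrict_subset_supp (x : Fin d → ℝ) (T : Finset (Fin d)) :
    supp (restrict x T) ⊆ supp x :=
  supp_subset_iff.2 fun i hi => by simp [restrict_apply, supp_subset_iff.1 subset_rfl i hi]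

lemma euclNorm_eq_norm (x : Fin d → ℝ) :
    euclNorm x = ‖(WithLp.toLp 2 x : EuclideanSpace ℝ (Fin d))‖ := by
  simp [euclNorm, EuclideanSpace.norm_eq]

lemma euclNorm_nonneg (x : Fin d → ℝ) : 0 ≤ euclNorm x := Real.sqrt_nonneg _

lemma euclNorm_sq_eq_sum (x : Fin d → ℝ) : euclNorm x ^ 2 = ∑ i, x i ^ 2 :=
  Real.sq_sqrt (by positivity)

lemma euclNorm_sq (x : Fin d → ℝ) : euclNorm x ^ 2 = x ⬝ᵥ x := by
  rw [euclNorm, Real.sq_sqrt (by positivity)]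
  simp [dotProduct, sq]

lemma euclNorm_sub_le (x y : Fin d → ℝ) : euclNorm (x - y) ≤ euclNorm x + euclNorm y := by
  simpa only [euclNorm_eq_norm, WithLp.toLp_sub] using norm_sub_le _ _

lemma euclNorm_smul (c : ℝ) (x : Fin d → ℝ) : euclNorm (c • x) = |c| * euclNorm x := by
  simp only [euclNorm_eq_norm, WithLp.toLp_smul, norm_smul, Real.norm_eq_abs]

lemma euclNorm_eq_zero {x : Fin d → ℝ} : euclNorm x = 0 ↔ x = 0 := by
  simp [euclNorm_eq_norm]

lemma euclNorm_restrict_sq (x : Fin d → ℝ) (T : Finset (Fin d)) :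
    euclNorm (restrict x T) ^ 2 = ∑ i ∈ T, x i ^ 2 := by
  rw [euclNorm, Real.sq_sqrt (by positivity)]
  simp [restrict_apply, ite_pow, sum_ite_mem]

lemma euclNorm_restrict_le_of_subset (x : Fin d → ℝ) {T T' : Finset (Fin d)} (h : T ⊆ T') :
    euclNorm (restrict x T) ≤ euclNorm (restrict x T') := by
  rw [← pow_le_pow_iff_left₀ (euclNorm_nonneg _) (euclNorm_nonneg _) two_ne_zero,
    euclNorm_restrict_sq, euclNorm_restrict_sq]
  exact sum_le_sum_of_subset_of_nonneg h fun i _ _ => sq_nonneg _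

lemma euclNorm_sq_eq_restrict_add_restrict_compl (x : Fin d → ℝ) (T : Finset (Fin d)) :
    euclNorm x ^ 2 = euclNorm (restrict x T) ^ 2 + euclNorm (restrict x Tᶜ) ^ 2 := by
  rw [euclNorm_restrict_sq, euclNorm_restrict_sq, sum_add_sum_compl, euclNorm,
    Real.sq_sqrt (by positivity)]

lemma restrict_dotProduct_self (x : Fin d → ℝ) (T : Finset (Fin d)) :
    restrict x T ⬝ᵥ x = euclNorm (restrict x T) ^ 2 := by
  rw [euclNorm_restrict_sq]
  simp [dotProduct, restrict_apply, ite_mul, sq, sum_ite_mem]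

lemma supp_smul_subset (c : ℝ) (x : Fin d → ℝ) : supp (c • x) ⊆ supp x :=
  supp_subset_iff.2 fun i hi => by simp [supp_subset_iff.1 subset_rfl i hi]

lemma restrict_congr {x y : Fin d → ℝ} {T : Finset (Fin d)} (h : ∀ i ∈ T, x i = y i) :
    restrict x T = restrict y T :=
  funext fun i => by by_cases hi : i ∈ T <;> simp [restrict_apply, hi, h]

lemma euclNorm_sub_sq_of_supp_subset {u : Fin d → ℝ} {U : Finset (Fin d)} (hu : supp u ⊆ U)
    (x : Fin d → ℝ) :
    euclNorm (x - u) ^ 2 = euclNorm (restrict x Uᶜ) ^ 2 + euclNorm (restrict (x - u) U) ^ 2 := by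
  rw [euclNorm_sq_eq_restrict_add_restrict_compl _ U, add_comm]
  congr 3
  refine restrict_congr fun i hi => ?_
  simp [supp_subset_iff.1 hu i (mem_compl.1 hi)]

lemma abs_dotProduct_le_euclNorm_mul (x y : Fin d → ℝ) : |x ⬝ᵥ y| ≤ euclNorm x * euclNorm y := by
  have := abs_real_inner_le_norm (WithLp.toLp 2 y : EuclideanSpace ℝ (Fin d)) (WithLp.toLp 2 x)
  simpa [EuclideanSpace.inner_eq_star_dotProduct, euclNorm_eq_norm, mul_comm] using this

lemma euclNorm_restrict_le_of_dotProduct_le {g : Fin d → ℝ} {W : Finset (Fin d)} {c : ℝ}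
    (hc : 0 ≤ c) (h : ∀ q, supp q ⊆ W → q ⬝ᵥ g ≤ c * euclNorm q) :
    euclNorm (restrict g W) ≤ c := by
  have := h _ (supp_restrict_subset g W)
  rw [restrict_dotProduct_self] at this
  nlinarith [euclNorm_nonneg (restrict g W)]

lemma sum_sdiff_sq_le_of_abs_le {ι : Type*} [DecidableEq ι] {g : ι → ℝ} {S T : Finset ι}
    (hST : S.card ≤ T.card) (hT : ∀ i ∈ T, ∀ j ∉ T, |g j| ≤ |g i|) :
    ∑ i ∈ S \ T, g i ^ 2 ≤ ∑ i ∈ T \ S, g i ^ 2 := by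
  rw [← card_sdiff_le_card_sdiff_iff] at hST
  rcases (T \ S).eq_empty_or_nonempty with hTS | hTS
  · rw [hTS, card_empty, Nat.le_zero, card_eq_zero] at hST
    simp [hST, hTS]
  obtain ⟨i₀, hi₀, hmin⟩ := (T \ S).exists_min_image (fun i => g i ^ 2) hTS
  calc ∑ i ∈ S \ T, g i ^ 2 ≤ (S \ T).card • g i₀ ^ 2 :=
        sum_le_card_nsmul _ _ _ fun j hj =>
          sq_le_sq.2 (hT i₀ (mem_sdiff.1 hi₀).1 j (mem_sdiff.1 hj).2)
    _ ≤ (T \ S).card • g i₀ ^ 2 := nsmul_le_nsmul_left (sq_nonneg _) hST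
    _ ≤ ∑ i ∈ T \ S, g i ^ 2 := card_nsmul_le_sum _ _ _ hmin

lemma euclNorm_sub_restrict_sq_le {z u : Fin d → ℝ} {T : Finset (Fin d)}
    (hz : (supp z).card ≤ T.card) (hT : ∀ i ∈ T, ∀ j ∉ T, |u j| ≤ |u i|) :
    euclNorm (z - restrict u T) ^ 2 ≤ 3 * euclNorm (z - u) ^ 2 := by
  set S := supp z
  have hz0 : ∀ i ∉ S, z i = 0 := supp_subset_iff.1 subset_rfl
  have hsplit :
      euclNorm (z - restrict u T) ^ 2 = ∑ i ∈ T, (z i - u i) ^ 2 + ∑ i ∈ S \ T, z i ^ 2 := by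
    rw [euclNorm_sq_eq_restrict_add_restrict_compl _ T, euclNorm_restrict_sq, euclNorm_restrict_sq]
    congr 1
    · exact sum_congr rfl fun i hi => by simp [restrict_apply, hi]
    · have hST : S \ T ⊆ Tᶜ := fun i hi => mem_compl.2 (mem_sdiff.1 hi).2
      rw [← sum_subset hST fun i hi hiST => ?_]
      · exact sum_congr rfl fun i hi => by simp [restrict_apply, (mem_sdiff.1 hi).2]
      · have hiS : i ∉ S := fun hiS => hiST (mem_sdiff.2 ⟨hiS, mem_compl.1 hi⟩)
        simp [restrict_apply, mem_compl.1 hi, hz0 i hiS]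
  have hmove :
      ∑ i ∈ S \ T, z i ^ 2 ≤ 2 * ∑ i ∈ S \ T, (z i - u i) ^ 2 + 2 * ∑ i ∈ S \ T, u i ^ 2 := by
    rw [mul_sum, mul_sum, ← sum_add_distrib]
    exact sum_le_sum fun i _ => by simpa [mul_add] using add_sq_le (a := z i - u i) (b := u i)
  have hexch : ∑ i ∈ S \ T, u i ^ 2 ≤ ∑ i ∈ T \ S, (z i - u i) ^ 2 :=
    (sum_sdiff_sq_le_of_abs_le hz hT).trans_eq
      (sum_congr rfl fun i hi => by simp [hz0 i (mem_sdiff.1 hi).2])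
  have hTS : ∑ i ∈ T \ S, (z i - u i) ^ 2 ≤ ∑ i ∈ T, (z i - u i) ^ 2 :=
    sum_le_sum_of_subset_of_nonneg sdiff_subset fun i _ _ => sq_nonneg _
  have htotal :
      ∑ i ∈ T, (z i - u i) ^ 2 + ∑ i ∈ S \ T, (z i - u i) ^ 2 ≤ euclNorm (z - u) ^ 2 := by
    rw [← sum_union disjoint_sdiff, euclNorm_sq_eq_sum]
    exact sum_le_univ_sum_of_nonneg fun i => sq_nonneg _
  have hnonneg : 0 ≤ ∑ i ∈ S \ T, (z i - u i) ^ 2 := sum_nonneg fun i _ => sq_nonneg _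
  linarith

lemma euclNorm_sub_restrict_sq_le_of_subset {x u : Fin d → ℝ} {T U : Finset (Fin d)}
    (hu : supp u ⊆ U) (hTU : T ⊆ U) (hx : (supp x).card ≤ T.card)
    (hT : ∀ i ∈ T, ∀ j ∉ T, |u j| ≤ |u i|) :
    euclNorm (x - restrict u T) ^ 2 ≤
      euclNorm (restrict x Uᶜ) ^ 2 + 3 * euclNorm (restrict (x - u) U) ^ 2 := by
  rw [euclNorm_sub_sq_of_supp_subset ((supp_restrict_subset u T).trans hTU) x]
  have hu0 := supp_subset_iff.1 hu
  have hxU : restrict (x - restrict u T) U = restrict x U - restrict u T := funext fun i => by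
    by_cases hi : i ∈ U
    · simp [restrict_apply, hi]
    · simp [restrict_apply, hi, mt (@hTU i) hi]
  have huU : restrict x U - u = restrict (x - u) U := funext fun i => by
    by_cases hi : i ∈ U <;> simp [restrict_apply, hi, hu0]
  rw [hxU, ← huU]
  gcongr
  exact euclNorm_sub_restrict_sq_le
    ((card_le_card (supp_restrict_subset_supp x U)).trans hx) hT

lemma euclNorm_restrict_add_le_sqrt_two_mul (x : Fin d → ℝ) {s t : Finset (Fin d)}
    (hst : Disjoint s t) :
    euclNorm (restrict x s) + euclNorm (restrict x t) ≤ √2 * euclNorm (restrict x (s ∪ t)) := by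
  rw [← Real.sqrt_sq (euclNorm_nonneg (restrict x (s ∪ t))), ← Real.sqrt_mul zero_le_two,
    Real.le_sqrt (add_nonneg (euclNorm_nonneg _) (euclNorm_nonneg _)) (by positivity), euclNorm_restrict_sq, sum_union hst, ← euclNorm_restrict_sq,
    ← euclNorm_restrict_sq]
  exact add_sq_le

end Basic

namespace RIP

variable {m d L L' : ℕ} {A : Matrix (Fin m) (Fin d) ℝ} {δ δ' : ℝ}

lemma euclNorm_mulVec_le (hA : RIP A L δ) {x : Fin d → ℝ} (hx : (supp x).card ≤ L) :
    euclNorm (A *ᵥ x) ≤ √(1 + δ) * euclNorm x := by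
  rw [← Real.sqrt_sq (euclNorm_nonneg (A *ᵥ x)), ← Real.sqrt_sq (euclNorm_nonneg x),
    ← Real.sqrt_mul' _ (sq_nonneg _)]
  exact Real.sqrt_le_sqrt (hA.2.2 x hx).2

lemma two_mul_abs_dotProduct_sub_le (hA : RIP A L δ) {S : Finset (Fin d)} (hS : S.card ≤ L)
    {v w : Fin d → ℝ} (hv : supp v ⊆ S) (hw : supp w ⊆ S) :
    2 * |A *ᵥ v ⬝ᵥ A *ᵥ w - v ⬝ᵥ w| ≤ δ * (euclNorm v ^ 2 + euclNorm w ^ 2) := by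
  -- Polarization: `4 ⟪A v, A w⟫ = ‖A (v + w)‖² - ‖A (v - w)‖²`.
  rw [supp_subset_iff] at hv hw
  have hplus := hA.2.2 (v + w) <| (card_le_card <| supp_subset_iff.2 fun i hi => by
    simp [hv i hi, hw i hi]).trans hS
  have hminus := hA.2.2 (v - w) <| (card_le_card <| supp_subset_iff.2 fun i hi => by
    simp [hv i hi, hw i hi]).trans hS
  simp only [euclNorm_sq, mulVec_add, mulVec_sub, add_dotProduct, dotProduct_add, sub_dotProduct,
    dotProduct_sub, dotProduct_comm (A *ᵥ w), dotProduct_comm w] at hplus hminus ⊢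
  rcases abs_cases (A *ᵥ v ⬝ᵥ A *ᵥ w - v ⬝ᵥ w) with ⟨h, -⟩ | ⟨h, -⟩ <;> rw [h] <;>
    linarith [hplus.1, hplus.2, hminus.1, hminus.2]

lemma abs_dotProduct_sub_le (hA : RIP A L δ) {S : Finset (Fin d)} (hS : S.card ≤ L)
    {v w : Fin d → ℝ} (hv : supp v ⊆ S) (hw : supp w ⊆ S) :
    |A *ᵥ v ⬝ᵥ A *ᵥ w - v ⬝ᵥ w| ≤ δ * euclNorm v * euclNorm w := by
  rcases eq_or_ne v 0 with rfl | hv0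
  · simp [euclNorm]
  rcases eq_or_ne w 0 with rfl | hw0
  · simp [euclNorm]
  have hpos : 0 < euclNorm v * euclNorm w :=
    mul_pos ((euclNorm_nonneg v).lt_of_ne' (euclNorm_eq_zero.not.2 hv0))
      ((euclNorm_nonneg w).lt_of_ne' (euclNorm_eq_zero.not.2 hw0))
  -- Rescaling to equal norms turns the AM-GM bound into the product bound.
  have key := hA.two_mul_abs_dotProduct_sub_le hS (v := euclNorm w • v) (w := euclNorm v • w)
    ((supp_smul_subset _ _).trans hv) ((supp_smul_subset _ _).trans hw)
  simp only [mulVec_smul, smul_dotProduct, dotProduct_smul, euclNorm_smul, smul_eq_mul,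
    abs_of_nonneg (euclNorm_nonneg _)] at key
  rw [← mul_sub, ← mul_sub, abs_mul, abs_mul, abs_of_nonneg (euclNorm_nonneg _),
    abs_of_nonneg (euclNorm_nonneg _)] at key
  refine le_of_mul_le_mul_left ?_ (mul_pos two_pos hpos)
  linear_combination key

lemma abs_dotProduct_transpose_mulVec_sub_le (hA : RIP A L δ) (hA' : RIP A L' δ')
    {S : Finset (Fin d)} (hS : S.card ≤ L) {q x : Fin d → ℝ} (hqS : supp q ⊆ S)
    (hxS : supp x ⊆ S) (hq : (supp q).card ≤ L') (e : Fin m → ℝ) :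
    |q ⬝ᵥ (Aᵀ *ᵥ (A *ᵥ x + e) - x)| ≤ (δ * euclNorm x + √(1 + δ') * euclNorm e) * euclNorm q := by
  have hsplit : q ⬝ᵥ (Aᵀ *ᵥ (A *ᵥ x + e) - x) = (A *ᵥ q ⬝ᵥ A *ᵥ x - q ⬝ᵥ x) + A *ᵥ q ⬝ᵥ e := by
    rw [dotProduct_sub, dotProduct_mulVec, vecMul_transpose, dotProduct_add]
    ring
  have hx := hA.abs_dotProduct_sub_le hS hqS hxS
  have he := (abs_dotProduct_le_euclNorm_mul (A *ᵥ q) e).trans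
    (mul_le_mul_of_nonneg_right (hA'.euclNorm_mulVec_le hq) (euclNorm_nonneg e))
  rw [hsplit]
  refine (abs_add_le _ _).trans ?_
  linarith

lemma euclNorm_restrict_compl_le (hA : RIP A L δ) {x : Fin d → ℝ} (e : Fin m → ℝ)
    {h : Finset (Fin d)} (hcard : (supp x).card ≤ h.card) (hL : (supp x ∪ h).card ≤ L)
    (htop : ∀ i ∈ h, ∀ j ∉ h, |(Aᵀ *ᵥ (A *ᵥ x + e)) j| ≤ |(Aᵀ *ᵥ (A *ᵥ x + e)) i|) :
    euclNorm (restrict x hᶜ) ≤ √2 * (δ * euclNorm x + √(1 + δ) * euclNorm e) := by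
  set g := Aᵀ *ᵥ (A *ᵥ x + e)
  set S := supp x
  have hx0 : ∀ i ∉ S, x i = 0 := supp_subset_iff.1 subset_rfl
  have hoff : restrict x hᶜ = restrict g (S \ h) - restrict (g - x) (S \ h) := funext fun i => by
    by_cases hiS : i ∈ S <;> by_cases hih : i ∈ h <;> simp [restrict_apply, hiS, hih, hx0]
  have hexch : euclNorm (restrict g (S \ h)) ≤ euclNorm (restrict (g - x) (h \ S)) := by
    rw [← pow_le_pow_iff_left₀ (euclNorm_nonneg _) (euclNorm_nonneg _) two_ne_zero,
      euclNorm_restrict_sq, euclNorm_restrict_sq]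
    refine (sum_sdiff_sq_le_of_abs_le hcard htop).trans_eq (sum_congr rfl fun i hi => ?_)
    simp [hx0 i (mem_sdiff.1 hi).2]
  have hW : S \ h ∪ h \ S ⊆ S ∪ h := union_subset_union sdiff_subset sdiff_subset
  have hcorr : euclNorm (restrict (g - x) (S \ h ∪ h \ S)) ≤
      δ * euclNorm x + √(1 + δ) * euclNorm e :=
    euclNorm_restrict_le_of_dotProduct_le (add_nonneg (mul_nonneg hA.1.le (euclNorm_nonneg _))
      (mul_nonneg (Real.sqrt_nonneg _) (euclNorm_nonneg _))) fun q hq => (le_abs_self _).trans <|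
      hA.abs_dotProduct_transpose_mulVec_sub_le hA hL (hq.trans hW) subset_union_left
        ((card_le_card (hq.trans hW)).trans hL) e
  calc euclNorm (restrict x hᶜ)
      ≤ euclNorm (restrict g (S \ h)) + euclNorm (restrict (g - x) (S \ h)) :=
        hoff ▸ euclNorm_sub_le _ _
    _ ≤ euclNorm (restrict (g - x) (S \ h)) + euclNorm (restrict (g - x) (h \ S)) := by
        linarith
    _ ≤ √2 * euclNorm (restrict (g - x) (S \ h ∪ h \ S)) :=
        euclNorm_restrict_add_le_sqrt_two_mul _ disjoint_sdiff_sdiff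
    _ ≤ √2 * (δ * euclNorm x + √(1 + δ) * euclNorm e) := by gcongr

end RIP

namespace LeastSq

variable {m d L L' : ℕ} {A : Matrix (Fin m) (Fin d) ℝ} {δ δ' : ℝ}
  {x u : Fin d → ℝ} {e : Fin m → ℝ} {U : Finset (Fin d)}

lemma euclNorm_restrict_sub_le (hLS : LeastSq A (A *ᵥ x + e) U u) (hA : RIP A L δ)
    (hA' : RIP A L' δ') (hL : (supp x ∪ U).card ≤ L) (hL' : U.card ≤ L') :
    euclNorm (restrict (x - u) U) ≤ δ * euclNorm (x - u) + √(1 + δ') * euclNorm e := by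
  refine euclNorm_restrict_le_of_dotProduct_le (add_nonneg (mul_nonneg hA.1.le (euclNorm_nonneg _))
    (mul_nonneg (Real.sqrt_nonneg _) (euclNorm_nonneg _))) fun q hq => ?_
  have horth : q ⬝ᵥ Aᵀ *ᵥ (A *ᵥ (x - u) + e) = 0 := by
    rw [dotProduct_mulVec, vecMul_transpose, dotProduct_comm, mulVec_sub,
      show A *ᵥ x - A *ᵥ u + e = A *ᵥ x + e - A *ᵥ u by abel]
    exact hLS.2 q hq
  have hsupp : supp (x - u) ⊆ supp x ∪ U :=
    (supp_sub_subset x u).trans (union_subset_union subset_rfl hLS.1)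
  have := hA.abs_dotProduct_transpose_mulVec_sub_le hA' hL (hq.trans subset_union_right)
    hsupp ((card_le_card hq).trans hL') e
  rw [dotProduct_sub, horth, zero_sub, abs_neg] at this
  exact (le_abs_self _).trans this

end LeastSq

lemma le_div_sqrt_mul_add_div_of_le_mul_sqrt {δ a c w : ℝ} (hδ0 : 0 ≤ δ) (hδ1 : δ < 1)
    (ha : 0 ≤ a) (hc : 0 ≤ c) (h : w ≤ δ * √(a ^ 2 + w ^ 2) + c) :
    w ≤ δ / √(1 - δ ^ 2) * a + c / (1 - δ) := by
  have hδ2 : 0 < 1 - δ ^ 2 := by nlinarith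
  set s := √(1 - δ ^ 2)
  have hs : 0 < s := Real.sqrt_pos.2 hδ2
  have hs2 : s ^ 2 = 1 - δ ^ 2 := Real.sq_sqrt hδ2.le
  set P := δ / s * a
  set Q := c / (1 - δ)
  have hP : 0 ≤ P := by positivity
  have hQ : 0 ≤ Q := div_nonneg hc (by linarith)
  have hPs : P * s = δ * a := by simp only [P]; field_simp
  have hQc : Q * (1 - δ) = c := by simp only [Q]; field_simp [(by linarith : 1 - δ ≠ 0)]
  by_contra! hw
  have hwc : 0 ≤ w - c := by nlinarith
  have hsq : (w - c) ^ 2 ≤ δ ^ 2 * (a ^ 2 + w ^ 2) := by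
    have := pow_le_pow_left₀ hwc (show w - c ≤ δ * √(a ^ 2 + w ^ 2) by linarith) 2
    rwa [mul_pow, Real.sq_sqrt (by positivity)] at this
  -- `(1 - δ²) t² - 2 c t + c² - δ² a²` is positive at `t = P + Q` and increasing beyond it.
  have hgap : 0 < (w - (P + Q)) * (s ^ 2 * (w + P + Q) - 2 * c) :=
    mul_pos (by linarith) (by nlinarith)
  have hexpand : (1 - δ ^ 2) * w ^ 2 - 2 * c * w + c ^ 2 - δ ^ 2 * a ^ 2 =
      (w - (P + Q)) * (s ^ 2 * (w + P + Q) - 2 * c) + 2 * P * Q * δ * (1 - δ) := by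
    linear_combination (2 * P * Q + Q ^ 2 - w ^ 2) * hs2 + (P * s + δ * a) * hPs +
      (Q * (1 + δ) - c + 2 * P) * hQc
  nlinarith [mul_nonneg (mul_nonneg hP hQ) (mul_nonneg hδ0 (by linarith : (0 : ℝ) ≤ 1 - δ))]

lemma sqrt_sq_add_sq_add_le (a p : ℝ) {q : ℝ} (hq : 0 ≤ q) :
    √(a ^ 2 + (p + q) ^ 2) ≤ √(a ^ 2 + p ^ 2) + q := by
  have hp' : p ≤ √(a ^ 2 + p ^ 2) := Real.le_sqrt_of_sq_le (by nlinarith)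
  rw [Real.sqrt_le_left (by positivity)]
  nlinarith [Real.sq_sqrt (by positivity : 0 ≤ a ^ 2 + p ^ 2)]

lemma sqrt_sq_add_three_mul_sq_le {δ a Q w : ℝ} (hδ0 : 0 ≤ δ) (hδ1 : δ < 1) (ha : 0 ≤ a)
    (hQ : 0 ≤ Q) (hw0 : 0 ≤ w) (hw : w ≤ δ / √(1 - δ ^ 2) * a + Q) :
    √(a ^ 2 + 3 * w ^ 2) ≤ √((1 + 2 * δ ^ 2) / (1 - δ ^ 2)) * a + √3 * Q := by
  have hδ2 : 0 < 1 - δ ^ 2 := by nlinarith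
  set P := δ / √(1 - δ ^ 2) * a
  have hP : a ^ 2 + (√3 * P) ^ 2 = (1 + 2 * δ ^ 2) / (1 - δ ^ 2) * a ^ 2 := by
    simp only [P, mul_pow, div_pow, Real.sq_sqrt hδ2.le, Real.sq_sqrt zero_le_three]
    field_simp
    ring
  have h3 : (√3 * P + √3 * Q) ^ 2 = 3 * (P + Q) ^ 2 := by
    rw [← mul_add, mul_pow, Real.sq_sqrt zero_le_three]
  calc √(a ^ 2 + 3 * w ^ 2) ≤ √(a ^ 2 + (√3 * P + √3 * Q) ^ 2) :=
        Real.sqrt_le_sqrt (by rw [h3]; gcongr)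
    _ ≤ √(a ^ 2 + (√3 * P) ^ 2) + √3 * Q := sqrt_sq_add_sq_add_le _ _ (by positivity)
    _ = √((1 + 2 * δ ^ 2) / (1 - δ ^ 2)) * a + √3 * Q := by
        rw [hP, Real.sqrt_mul (by positivity), Real.sqrt_sq ha]

lemma cosamp_bound_of_step_bounds {δ δ' a ε w y X : ℝ} (hδ0 : 0 ≤ δ) (hδ1 : δ < 1) (ha : 0 ≤ a)
    (hε : 0 ≤ ε) (hw0 : 0 ≤ w) (hw : w ≤ δ * √(a ^ 2 + w ^ 2) + √(1 + δ') * ε)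
    (hy : y ≤ √(a ^ 2 + 3 * w ^ 2)) (hX : X ≤ √2 * (δ * y + √(1 + δ) * ε)) :
    X ≤ √(2 * δ ^ 2 * (1 + 2 * δ ^ 2) / (1 - δ ^ 2)) * a +
      (δ * √(6 * (1 + δ')) / (1 - δ) + √(2 * (1 + δ))) * ε := by
  have hQ : 0 ≤ √(1 + δ') * ε / (1 - δ) := div_nonneg (by positivity) (by linarith)
  have hy' := hy.trans <| sqrt_sq_add_three_mul_sq_le hδ0 hδ1 ha hQ hw0 <|
    le_div_sqrt_mul_add_div_of_le_mul_sqrt hδ0 hδ1 ha (by positivity) hw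
  have hρ : √(2 * δ ^ 2 * (1 + 2 * δ ^ 2) / (1 - δ ^ 2)) =
      √2 * δ * √((1 + 2 * δ ^ 2) / (1 - δ ^ 2)) := by
    rw [mul_div_assoc, Real.sqrt_mul (by positivity), Real.sqrt_mul zero_le_two,
      Real.sqrt_sq hδ0]
  have h6 : √(6 * (1 + δ')) = √2 * √3 * √(1 + δ') := by
    rw [← Real.sqrt_mul zero_le_two, ← Real.sqrt_mul (by norm_num)]
    norm_num
  calc X ≤ √2 * (δ * (√((1 + 2 * δ ^ 2) / (1 - δ ^ 2)) * a + √3 * (√(1 + δ') * ε / (1 - δ))) +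
        √(1 + δ) * ε) := hX.trans (by gcongr)
    _ = _ := by rw [hρ, h6, Real.sqrt_mul zero_le_two]; ring

/-- Lemma 1: one CoSaMP iteration decays the missed-energy metric
`‖(x_S)_{\bar{U^n}}‖` with rate `ρ_{4K}`. -/
theorem cosamp_metric_decay
    {m d K : ℕ} (A : Matrix (Fin m) (Fin d) ℝ) (xS : Fin d → ℝ) (e : Fin m → ℝ)
    (δ3 δ4 : ℝ)
    (hxS : (supp xS).card ≤ K)
    (hRIP3 : RIP A (3 * K) δ3) (hRIP4 : RIP A (4 * K) δ4)
    (Uprev : Finset (Fin d)) (hUprev : Uprev.card ≤ 3 * K)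
    (uprev : Fin d → ℝ) (hLS : LeastSq A (A.mulVec xS + e) Uprev uprev)
    (Sprev : Finset (Fin d)) (hSprevU : Sprev ⊆ Uprev) (hSprevCard : Sprev.card = K)
    (hThresh : ∀ i ∈ Sprev, ∀ j ∉ Sprev, |uprev j| ≤ |uprev i|)
    (xprev : Fin d → ℝ) (hxprev : xprev = restrict uprev Sprev)
    (h : Finset (Fin d)) (hhcard : h.card = 2 * K)
    (hident : ∀ i ∈ h, ∀ j ∉ h,
      |A.transpose.mulVec (A.mulVec xS + e - A.mulVec xprev) j| ≤
        |A.transpose.mulVec (A.mulVec xS + e - A.mulVec xprev) i|)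
    (U : Finset (Fin d)) (hU : U = Sprev ∪ h) :
    euclNorm (restrict xS Uᶜ) ≤
      Real.sqrt (2 * δ4 ^ 2 * (1 + 2 * δ4 ^ 2) / (1 - δ4 ^ 2)) *
          euclNorm (restrict xS Uprevᶜ) +
        (δ4 * Real.sqrt (6 * (1 + δ3)) / (1 - δ4) + Real.sqrt (2 * (1 + δ4))) *
          euclNorm e := by
  subst hxprev hU
  have hcard4 : (supp xS ∪ Uprev).card ≤ 4 * K := (card_union_le _ _).trans (by omega)
  have hls := hLS.euclNorm_restrict_sub_le hRIP4 hRIP3 hcard4 hUprev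
  rw [← Real.sqrt_sq (euclNorm_nonneg (xS - uprev)), euclNorm_sub_sq_of_supp_subset hLS.1] at hls
  have hprune := euclNorm_sub_restrict_sq_le_of_subset hLS.1 hSprevU (hSprevCard ▸ hxS) hThresh
  set Δ := xS - restrict uprev Sprev
  have hΔ : supp Δ ⊆ supp xS ∪ Sprev :=
    (supp_sub_subset _ _).trans (union_subset_union subset_rfl (supp_restrict_subset _ _))
  have hΔcard : (supp Δ).card ≤ 2 * K :=
    (card_le_card hΔ).trans ((card_union_le _ _).trans (by omega))
  rw [show A *ᵥ xS + e - A *ᵥ restrict uprev Sprev = A *ᵥ Δ + e by rw [mulVec_sub]; abel]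
    at hident
  have hsel := hRIP4.euclNorm_restrict_compl_le e (by omega)
    ((card_union_le _ _).trans (by omega)) hident
  have hmissed : euclNorm (restrict xS (Sprev ∪ h)ᶜ) ≤ euclNorm (restrict Δ hᶜ) := by
    rw [restrict_congr (y := Δ) fun i hi => by
      simp [Δ, restrict_apply, (notMem_union.1 (mem_compl.1 hi)).1]]
    exact euclNorm_restrict_le_of_subset _ (compl_subset_compl.2 subset_union_right)
  exact cosamp_bound_of_step_bounds hRIP4.1.le hRIP4.2.1 (euclNorm_nonneg _) (euclNorm_nonneg e)
    (euclNorm_nonneg _) hls ((Real.le_sqrt (euclNorm_nonneg _) (by positivity)).2 hprune)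
    (hmissed.trans hsel)
end

section
/- Let x_S ∈ ℝⁿ be supported on a set S with |S| ≤ K, let u ∈ ℝⁿ be supported on an index set U, and let S' ⊆ U be a set of K indices such that |u_i| ≥ |u_j| for every i ∈ S' and j ∈ U \ S'. Then ‖(x_S)_{U \ S'}‖ ≤ √2·‖(u − x_S)_U‖. -/
open Finset

lemma euclNorm_restrict {d : ℕ} (x : Fin d → ℝ) (T : Finset (Fin d)) :
    euclNorm (_root_.restrict x T) = Real.sqrt (∑ i ∈ T, x i ^ 2) := by
  unfold euclNorm _root_.restrict
  congr 1
  calc ∑ i, (if i ∈ T then x i else 0) ^ 2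
      = ∑ i, (if i ∈ T then x i ^ 2 else 0) := by
        apply Finset.sum_congr rfl; intro i _; split <;> simp
    _ = ∑ i ∈ T, x i ^ 2 := by simp [Finset.sum_ite_mem]

lemma sum_le_sum_of_le {α : Type*} (A B : Finset α) (f g : α → ℝ)
    (hcard : A.card ≤ B.card) (hg : ∀ j ∈ B, 0 ≤ g j)
    (hle : ∀ i ∈ A, ∀ j ∈ B, f i ≤ g j) :
    ∑ i ∈ A, f i ≤ ∑ j ∈ B, g j := by
  rcases B.eq_empty_or_nonempty with rfl | hB
  · simp only [Finset.card_empty, Nat.le_zero, Finset.card_eq_zero] at hcard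
    simp [hcard]
  · obtain ⟨j0, hj0, hmin⟩ := B.exists_min_image g hB
    calc ∑ i ∈ A, f i ≤ ∑ _i ∈ A, g j0 := Finset.sum_le_sum (fun i hi => hle i hi j0 hj0)
      _ = A.card * g j0 := by simp [mul_comm]
      _ ≤ B.card * g j0 := by
          apply mul_le_mul_of_nonneg_right _ (hg j0 hj0)
          exact_mod_cast hcard
      _ = ∑ _j ∈ B, g j0 := by simp [mul_comm]
      _ ≤ ∑ j ∈ B, g j := Finset.sum_le_sum (fun j hj => hmin j hj)

/-- update (hard-thresholding) step bound of CoSaMP. -/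
theorem cosamp_update_bound
    {d K : ℕ} (xS u : Fin d → ℝ) (S U S' : Finset (Fin d))
    (hxS : supp xS ⊆ S) (hScard : S.card ≤ K)
    (hu : supp u ⊆ U)
    (hS'U : S' ⊆ U) (hS'card : S'.card = K)
    (hThresh : ∀ i ∈ S', ∀ j ∈ U \ S', |u j| ≤ |u i|) :
    euclNorm (restrict xS (U \ S')) ≤ Real.sqrt 2 * euclNorm (restrict (u - xS) U) := by
  have hxS0 : ∀ i, i ∉ S → xS i = 0 := by
    intro i hi
    by_contra h
    exact hi (hxS (by simp [supp, h]))
  set T : Finset (Fin d) := U \ S' with hT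
  set w : Fin d → ℝ := u - xS with hw
  -- reduce to sum over S ∩ T
  have hA : ∑ i ∈ T, xS i ^ 2 = ∑ i ∈ S ∩ T, xS i ^ 2 := by
    rw [Finset.sum_subset (Finset.inter_subset_right)]
    intro i hi his
    have : i ∉ S := fun h => his (Finset.mem_inter.mpr ⟨h, hi⟩)
    simp [hxS0 i this]
  -- pointwise bound
  have hpt : ∀ i, xS i ^ 2 ≤ 2 * u i ^ 2 + 2 * w i ^ 2 := by
    intro i
    have : xS i = u i - w i := by simp [hw]
    rw [this]
    nlinarith [sq_nonneg (u i + w i)]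
  -- card bound
  have hcard : (S ∩ T).card ≤ (S' \ S).card := by
    have h1 : S ∩ T ⊆ S \ S' := by
      intro i hi
      simp only [Finset.mem_inter, hT, Finset.mem_sdiff] at hi ⊢
      exact ⟨hi.1, hi.2.2⟩
    calc (S ∩ T).card ≤ (S \ S').card := Finset.card_le_card h1
      _ = S.card - (S ∩ S').card := by
          rw [← Finset.card_inter_add_card_sdiff S S']; omega
      _ ≤ S'.card - (S' ∩ S).card := by
          rw [Finset.inter_comm]
          omega
      _ = (S' \ S).card := by
          rw [← Finset.card_inter_add_card_sdiff S' S]; omega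
  -- sum of u² over S∩T bounded by sum over S'\S
  have hu2 : ∑ i ∈ S ∩ T, u i ^ 2 ≤ ∑ j ∈ S' \ S, u j ^ 2 := by
    apply sum_le_sum_of_le _ _ _ _ hcard (fun j _ => sq_nonneg _)
    intro i hi j hj
    have hiT : i ∈ U \ S' := (Finset.mem_inter.mp hi).2
    have hjS' : j ∈ S' := (Finset.mem_sdiff.mp hj).1
    have := hThresh j hjS' i hiT
    calc u i ^ 2 = |u i| ^ 2 := (sq_abs _).symm
      _ ≤ |u j| ^ 2 := by
          apply pow_le_pow_left₀ (abs_nonneg _) this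
      _ = u j ^ 2 := sq_abs _
  -- on S' \ S, u = w
  have huw : ∑ j ∈ S' \ S, u j ^ 2 = ∑ j ∈ S' \ S, w j ^ 2 := by
    apply Finset.sum_congr rfl
    intro j hj
    have : xS j = 0 := hxS0 j (Finset.mem_sdiff.mp hj).2
    simp [hw, this]
  -- combine into key inequality on squares
  have hdisj : Disjoint (S' \ S) (S ∩ T) := by
    rw [Finset.disjoint_left]
    intro a ha hb
    exact (Finset.mem_sdiff.mp ha).2 (Finset.mem_inter.mp hb).1
  have hsub : (S' \ S) ∪ (S ∩ T) ⊆ U := by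
    intro a ha
    rcases Finset.mem_union.mp ha with h | h
    · exact hS'U (Finset.mem_sdiff.mp h).1
    · exact (Finset.mem_sdiff.mp (Finset.mem_inter.mp h).2).1
  have key : ∑ i ∈ T, xS i ^ 2 ≤ 2 * ∑ i ∈ U, w i ^ 2 := by
    calc ∑ i ∈ T, xS i ^ 2 = ∑ i ∈ S ∩ T, xS i ^ 2 := hA
      _ ≤ ∑ i ∈ S ∩ T, (2 * u i ^ 2 + 2 * w i ^ 2) :=
          Finset.sum_le_sum (fun i _ => hpt i)
      _ = 2 * ∑ i ∈ S ∩ T, u i ^ 2 + 2 * ∑ i ∈ S ∩ T, w i ^ 2 := by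
          rw [Finset.sum_add_distrib, Finset.mul_sum, Finset.mul_sum]
      _ ≤ 2 * ∑ j ∈ S' \ S, w j ^ 2 + 2 * ∑ i ∈ S ∩ T, w i ^ 2 := by
          have := hu2.trans_eq huw
          linarith
      _ = 2 * ∑ i ∈ (S' \ S) ∪ (S ∩ T), w i ^ 2 := by
          rw [Finset.sum_union hdisj]; ring
      _ ≤ 2 * ∑ i ∈ U, w i ^ 2 := by
          apply mul_le_mul_of_nonneg_left _ (by norm_num)
          exact Finset.sum_le_sum_of_subset_of_nonneg hsub (fun i _ _ => sq_nonneg _)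
  rw [euclNorm_restrict, euclNorm_restrict, ← Real.sqrt_mul (by norm_num)]
  exact Real.sqrt_le_sqrt key
end

section
/- Let y = A·x_S + e where x_S ∈ ℝⁿ is K-sparse with support S, and A satisfies the RIP of order 3K with constant δ_{3K} and of order 4K with constant δ_{4K} < 1. Let 1 ≤ p+q ≤ K, let U be an index set with |U| ≤ 3K containing {π(1),…,π(p+q)}, and let u be the least-squares solution on U. If x*_{p+q} > (√2·δ_{4K}/√(1−δ_{4K}²))·‖(x_S)_{\overline{U}}‖ + √2·τ₁·‖e‖, where τ₁ := √(1+δ_{3K})/(1−δ_{4K}), then min_{j ∈ {π(1),…,π(p+q)}} |u_j| > max_{i ∈ U \ S} |u_i|. -/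
open Finset

/-!
Write `v = u - x_U` and `a = x_{Ū}`: they have disjoint supports inside `S ∪ U`, of size at most
`4K`, and the normal equations give `‖Av‖² = ⟨Aa, Av⟩ + ⟨e, Av⟩`. Applying the RIP to every
`s a + t v` pinches a 2×2 quadratic form between `(1 ± δ)` times a diagonal one, which forces
`|⟨Aa, Av⟩| √(1-δ²) ‖v‖ ≤ δ ‖a‖ ‖Av‖²`. With Cauchy–Schwarz and `‖Av‖ ≥ √(1-δ) ‖v‖` this gives
`‖v‖ ≤ δ/√(1-δ²) ‖a‖ + ‖e‖/√(1-δ)`, and `1/√(1-δ₄) ≤ τ₁`. Finally, for `i ∉ S` and `k = π j`,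
`|u_k| ≥ |x_k| - |v_k| > √2 ‖v‖ - |v_k| ≥ |v_i| = |u_i|`, since `|x_k| ≥ x*_{p+q}`.
-/

open Matrix

section Vectors

variable {d : ℕ}

lemma dotProduct_le_euclNorm_mul (x y : Fin d → ℝ) : x ⬝ᵥ y ≤ euclNorm x * euclNorm y := by
  refine le_of_abs_le (abs_le_of_sq_le_sq ?_
    (mul_nonneg (euclNorm_nonneg x) (euclNorm_nonneg y)))
  rw [mul_pow, euclNorm_sq, euclNorm_sq]
  simpa [dotProduct, sq] using sum_mul_sq_le_sq_mul_sq univ x y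

lemma euclNorm_smul_add_smul_sq (a v : Fin d → ℝ) (s t : ℝ) :
    euclNorm (s • a + t • v) ^ 2
      = s ^ 2 * euclNorm a ^ 2 + 2 * (a ⬝ᵥ v) * (s * t) + t ^ 2 * euclNorm v ^ 2 := by
  simp only [euclNorm_sq, add_dotProduct, dotProduct_add, smul_dotProduct, dotProduct_smul,
    dotProduct_comm v a, smul_eq_mul]
  ring

lemma supp_smul_add_smul_subset (a v : Fin d → ℝ) (s t : ℝ) :
    supp (s • a + t • v) ⊆ supp a ∪ supp v := by
  intro i hi
  by_contra h
  simp only [mem_union, mem_supp, not_or, not_not] at h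
  simp [mem_supp, h.1, h.2] at hi

lemma dotProduct_eq_zero_of_disjoint_supp {a v : Fin d → ℝ}
    (h : Disjoint (supp a) (supp v)) : a ⬝ᵥ v = 0 := by
  refine sum_eq_zero fun i _ => ?_
  by_cases ha : a i = 0
  · simp [ha]
  · have hv : v i = 0 := by
      by_contra hv
      exact disjoint_left.mp h (mem_supp.mpr ha) (mem_supp.mpr hv)
    simp [hv]

lemma restrict_add_restrict_compl (x : Fin d → ℝ) (U : Finset (Fin d)) :
    restrict x U + restrict x Uᶜ = x := by
  funext i
  by_cases hi : i ∈ U <;> simp [_root_.restrict, hi]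

lemma supp_restrict_compl_subset (x : Fin d → ℝ) (U : Finset (Fin d)) :
    supp (restrict x Uᶜ) ⊆ supp x \ U := by
  intro i hi
  by_cases hiU : i ∈ U <;> simp_all [mem_supp, _root_.restrict]

lemma abs_add_abs_le_sqrt_two_mul_euclNorm (v : Fin d → ℝ) {i k : Fin d} (hik : i ≠ k) :
    |v i| + |v k| ≤ √2 * euclNorm v := by
  have hpair : v i ^ 2 + v k ^ 2 ≤ ∑ j, v j ^ 2 := by
    rw [← sum_pair (f := fun j => v j ^ 2) hik]
    exact sum_le_univ_sum_of_nonneg fun j => sq_nonneg (v j)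
  rw [euclNorm, ← Real.sqrt_mul zero_le_two]
  refine Real.le_sqrt_of_sq_le ?_
  nlinarith [sq_abs (v i), sq_abs (v k), sq_nonneg (|v i| - |v k|)]

lemma abs_lt_abs_of_sqrt_two_mul_euclNorm_sub_lt {u z : Fin d → ℝ} {i k : Fin d}
    (hi : z i = 0) (h : √2 * euclNorm (u - z) < |z k|) : |u i| < |u k| := by
  have hik : i ≠ k := by
    rintro rfl
    rw [hi, abs_zero] at h
    exact (mul_nonneg (Real.sqrt_nonneg 2) (euclNorm_nonneg _)).not_gt h
  have hpair := abs_add_abs_le_sqrt_two_mul_euclNorm (u - z) hik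
  have hzk : |z k| ≤ |u k| + |(u - z) k| := by
    simpa using abs_sub (u k) ((u - z) k)
  simp only [Pi.sub_apply, hi, sub_zero] at hpair hzk
  linarith

end Vectors

lemma sq_le_mul_of_forall_quadratic_nonneg {X Y Z : ℝ}
    (h : ∀ s t : ℝ, 0 ≤ X * s ^ 2 + 2 * Y * (s * t) + Z * t ^ 2) : Y ^ 2 ≤ X * Z := by
  have hd := discrim_le_zero (a := X) (b := 2 * Y) (c := Z) fun s => by nlinarith [h s 1]
  rw [discrim] at hd
  nlinarith

lemma sq_mul_le_of_quadratic_pinched {α β P Q c δ : ℝ} (hδ : 0 < δ) (hδ1 : δ < 1)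
    (hlow : ∀ s t : ℝ,
      (1 - δ) * (s ^ 2 * α + t ^ 2 * β) ≤ s ^ 2 * P + 2 * c * (s * t) + t ^ 2 * Q)
    (hup : ∀ s t : ℝ,
      s ^ 2 * P + 2 * c * (s * t) + t ^ 2 * Q ≤ (1 + δ) * (s ^ 2 * α + t ^ 2 * β)) :
    c ^ 2 * ((1 - δ ^ 2) * β) ≤ δ ^ 2 * α * Q ^ 2 := by
  have hα : 0 ≤ α := by nlinarith [hlow 1 0, hup 1 0]
  have hZ₁ : 0 ≤ Q - (1 - δ) * β := by nlinarith [hlow 0 1]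
  have hZ₂ : 0 ≤ (1 + δ) * β - Q := by nlinarith [hup 0 1]
  have d₁ : c ^ 2 ≤ (P - (1 - δ) * α) * (Q - (1 - δ) * β) :=
    sq_le_mul_of_forall_quadratic_nonneg fun s t => by nlinarith [hlow s t]
  have d₂ : c ^ 2 ≤ ((1 + δ) * α - P) * ((1 + δ) * β - Q) :=
    sq_le_mul_of_forall_quadratic_nonneg fun s t => by nlinarith [hup s (-t)]
  -- weighting `d₁` by `Z₂` and `d₂` by `Z₁` makes the `P`-terms cancel
  have key : c ^ 2 * β ≤ α * ((Q - (1 - δ) * β) * ((1 + δ) * β - Q)) := by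
    have := add_le_add (mul_le_mul_of_nonneg_right d₁ hZ₂) (mul_le_mul_of_nonneg_right d₂ hZ₁)
    nlinarith
  -- `δ² Q² - (1 - δ²) (Q - (1 - δ) β) ((1 + δ) β - Q) = (Q - (1 - δ²) β)²`
  nlinarith [mul_le_mul_of_nonneg_left key (by nlinarith : (0 : ℝ) ≤ 1 - δ ^ 2),
    mul_nonneg hα (sq_nonneg (Q - (1 - δ ^ 2) * β))]

lemma le_div_add_div_of_sq_eq_add {t w c η κ ε σ ρ : ℝ} (hσ : 0 < σ) (hρ : 0 < ρ)
    (hκ : 0 ≤ κ) (hε : 0 ≤ ε) (hw : ρ * t ≤ w) (hsplit : w ^ 2 = c + η)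
    (hc : |c| * (σ * t) ≤ κ * w ^ 2) (hη : η ≤ ε * w) :
    t ≤ κ / σ + ε / ρ := by
  by_contra! h
  have ht : 0 < t := lt_of_le_of_lt (by positivity) h
  have hwpos : 0 < w := lt_of_lt_of_le (mul_pos hρ ht) hw
  have hgap : σ * ε / ρ < σ * t - κ := by
    have := mul_lt_mul_of_pos_left h hσ
    rw [mul_add, mul_div_cancel₀ _ hσ.ne'] at this
    rw [mul_div_assoc]
    linarith
  have hdiv : σ * t * w ≤ κ * w + σ * t * ε := by
    have hσt : 0 ≤ σ * t := by positivity
    have hc' := mul_le_mul_of_nonneg_right (le_abs_self c) hσt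
    have hη' := mul_le_mul_of_nonneg_right hη hσt
    refine le_of_mul_le_mul_right ?_ hwpos
    calc σ * t * w * w = (c + η) * (σ * t) := by rw [← hsplit]; ring
      _ ≤ (κ * w + σ * t * ε) * w := by linarith
  have : σ * t * ε < w * (σ * t - κ) := calc
    σ * t * ε = ρ * t * (σ * ε / ρ) := by field_simp
    _ < ρ * t * (σ * t - κ) := mul_lt_mul_of_pos_left hgap (mul_pos hρ ht)
    _ ≤ w * (σ * t - κ) :=
      mul_le_mul_of_nonneg_right hw (by linarith [div_nonneg (mul_nonneg hσ.le hε) hρ.le])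
  linarith

lemma div_sqrt_le_sqrt_div_mul {a b ε : ℝ} (ha : 0 < a) (hab : a ≤ b) (hε : 0 ≤ ε) :
    ε / √a ≤ √b / a * ε := by
  have hsa : 0 < √a := Real.sqrt_pos.mpr ha
  calc ε / √a = √a / a * ε := by
        field_simp
        rw [Real.sq_sqrt ha.le]
    _ ≤ √b / a * ε := by gcongr

theorem RIP.abs_dotProduct_mulVec_mul_le {m d L : ℕ} {A : Matrix (Fin m) (Fin d) ℝ} {δ : ℝ}
    (hA : RIP A L δ) {a v : Fin d → ℝ} (hdisj : Disjoint (supp a) (supp v))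
    (hcard : (supp a ∪ supp v).card ≤ L) :
    |A *ᵥ a ⬝ᵥ A *ᵥ v| * (√(1 - δ ^ 2) * euclNorm v)
      ≤ δ * euclNorm a * euclNorm (A *ᵥ v) ^ 2 := by
  obtain ⟨hδ, hδ1, hbounds⟩ := hA
  have hform := fun s t => hbounds (s • a + t • v)
    ((card_le_card (supp_smul_add_smul_subset a v s t)).trans hcard)
  simp only [mulVec_add, mulVec_smul, euclNorm_smul_add_smul_sq,
    dotProduct_eq_zero_of_disjoint_supp hdisj, mul_zero, zero_mul, add_zero] at hform
  have hsq := sq_mul_le_of_quadratic_pinched hδ hδ1 (fun s t => (hform s t).1)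
    (fun s t => (hform s t).2)
  refine (pow_le_pow_iff_left₀ ?_ ?_ two_ne_zero).mp ?_
  · exact mul_nonneg (abs_nonneg _) (mul_nonneg (Real.sqrt_nonneg _) (euclNorm_nonneg v))
  · exact mul_nonneg (mul_nonneg hδ.le (euclNorm_nonneg a)) (sq_nonneg _)
  · rw [mul_pow, mul_pow, sq_abs, Real.sq_sqrt (by nlinarith)]
    linear_combination hsq

namespace LeastSq

variable {m d : ℕ} {A : Matrix (Fin m) (Fin d) ℝ} {x : Fin d → ℝ} {e y : Fin m → ℝ}
  {U : Finset (Fin d)} {u : Fin d → ℝ}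

lemma supp_sub_restrict_subset (hLS : LeastSq A y U u) (x : Fin d → ℝ) :
    supp (u - restrict x U) ⊆ U := by
  intro i hi
  by_contra hiU
  have hui : u i = 0 := by
    by_contra h
    exact hiU (hLS.1 (mem_supp.mpr h))
  simp [mem_supp, _root_.restrict, hiU, hui] at hi

lemma euclNorm_mulVec_sub_restrict_sq (hLS : LeastSq A (A *ᵥ x + e) U u) :
    euclNorm (A *ᵥ (u - restrict x U)) ^ 2
      = A *ᵥ restrict x Uᶜ ⬝ᵥ A *ᵥ (u - restrict x U) + e ⬝ᵥ A *ᵥ (u - restrict x U) := by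
  have horth : (A *ᵥ x + e - A *ᵥ u) ⬝ᵥ A *ᵥ (u - restrict x U) = 0 :=
    hLS.2 _ (hLS.supp_sub_restrict_subset x)
  have hres : A *ᵥ x + e - A *ᵥ u = A *ᵥ restrict x Uᶜ + e - A *ᵥ (u - restrict x U) := by
    conv_lhs => rw [← restrict_add_restrict_compl x U]
    rw [mulVec_add, mulVec_sub]
    abel
  rw [hres, sub_dotProduct, add_dotProduct] at horth
  rw [euclNorm_sq]
  linarith

theorem euclNorm_sub_restrict_le {L : ℕ} {δ : ℝ} (hLS : LeastSq A (A *ᵥ x + e) U u)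
    (hA : RIP A L δ) (hL : (supp x ∪ U).card ≤ L) :
    euclNorm (u - restrict x U) ≤
      δ / √(1 - δ ^ 2) * euclNorm (restrict x Uᶜ) + euclNorm e / √(1 - δ) := by
  set v := u - restrict x U
  set a := restrict x Uᶜ
  have hv : supp v ⊆ U := hLS.supp_sub_restrict_subset x
  have ha : supp a ⊆ supp x \ U := supp_restrict_compl_subset x U
  have hdisj : Disjoint (supp a) (supp v) :=
    disjoint_of_subset_left ha (disjoint_of_subset_right hv sdiff_disjoint)
  have hav : (supp a ∪ supp v).card ≤ L :=
    (card_le_card (union_subset_union (ha.trans sdiff_subset) hv)).trans hL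
  have hlow : √(1 - δ) * euclNorm v ≤ euclNorm (A *ᵥ v) := by
    refine (pow_le_pow_iff_left₀ (mul_nonneg (Real.sqrt_nonneg _) (euclNorm_nonneg v))
      (euclNorm_nonneg _) two_ne_zero).mp ?_
    rw [mul_pow, Real.sq_sqrt (by linarith [hA.2.1])]
    exact (hA.2.2 v ((card_le_card subset_union_right).trans hav)).1
  have hbound := le_div_add_div_of_sq_eq_add (Real.sqrt_pos.mpr (by nlinarith [hA.1, hA.2.1]))
    (Real.sqrt_pos.mpr (by linarith [hA.2.1])) (mul_nonneg hA.1.le (euclNorm_nonneg a))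
    (euclNorm_nonneg e) hlow hLS.euclNorm_mulVec_sub_restrict_sq
    (hA.abs_dotProduct_mulVec_mul_le hdisj hav) (dotProduct_le_euclNorm_mul e _)
  rwa [mul_div_right_comm] at hbound

end LeastSq

/-- `π` is 0-indexed: `π i` is the index of the `(i+1)`-th largest-magnitude entry of `x_S`, so
`x*_t = |x_S (π (t-1))|`. -/
theorem cosamp_selection_condition_general
    {m d K : ℕ} (A : Matrix (Fin m) (Fin d) ℝ) (xS : Fin d → ℝ) (e : Fin m → ℝ)
    (δ3 δ4 : ℝ)
    (hRIP3 : RIP A (3 * K) δ3) (hRIP4 : RIP A (4 * K) δ4)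
    (π : ℕ → Fin d)
    (hπsupp : supp xS ⊆ (Finset.range K).image π)
    (hπsort : ∀ i j, i ≤ j → j < K → |xS (π j)| ≤ |xS (π i)|)
    (p q : ℕ) (hpqK : p + q ≤ K)
    (U : Finset (Fin d)) (hUcard : U.card ≤ 3 * K)
    (hUπ : ∀ i < p + q, π i ∈ U)
    (u : Fin d → ℝ) (hLS : LeastSq A (A.mulVec xS + e) U u)
    (hgap : Real.sqrt 2 * δ4 / Real.sqrt (1 - δ4 ^ 2) * euclNorm (restrict xS Uᶜ) +
        Real.sqrt 2 * (Real.sqrt (1 + δ3) / (1 - δ4)) * euclNorm e <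
      |xS (π (p + q - 1))|) :
    ∀ j < p + q, ∀ i ∈ U \ supp xS, |u i| < |u (π j)| := by
  have hS : (supp xS).card ≤ K :=
    (card_le_card hπsupp).trans (card_image_le.trans (card_range K).le)
  have hv := hLS.euclNorm_sub_restrict_le hRIP4 ((card_union_le _ _).trans (by omega))
  have he := div_sqrt_le_sqrt_div_mul (a := 1 - δ4) (b := 1 + δ3) (by linarith [hRIP4.2.1])
    (by linarith [hRIP3.1, hRIP4.1]) (euclNorm_nonneg e)
  intro j hj i hi
  obtain ⟨hiU, hiS⟩ := mem_sdiff.mp hi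
  refine abs_lt_abs_of_sqrt_two_mul_euclNorm_sub_lt (z := restrict xS U)
    (by simpa [_root_.restrict, hiU, mem_supp] using hiS) ?_
  calc √2 * euclNorm (u - restrict xS U)
      ≤ √2 * (δ4 / √(1 - δ4 ^ 2) * euclNorm (restrict xS Uᶜ) +
          √(1 + δ3) / (1 - δ4) * euclNorm e) := by gcongr; linarith
    _ = √2 * δ4 / √(1 - δ4 ^ 2) * euclNorm (restrict xS Uᶜ) +
          √2 * (√(1 + δ3) / (1 - δ4)) * euclNorm e := by ring
    _ < |xS (π (p + q - 1))| := hgap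
    _ ≤ |xS (π j)| := hπsort j _ (by omega) (by omega)
    _ = |restrict xS U (π j)| := by simp [_root_.restrict, hUπ j hj]

/-- if the gap condition on `x*_{p+q}` holds, the `p+q` largest-magnitude
entries of `x_S` dominate, in the least-squares solution `u` on `U`, every wrong index
of `U`.  Here `π` is 0-indexed: `π i` is the index of the `(i+1)`-th largest-magnitude
entry of `x_S`, so `x*_t = |x_S (π (t-1))|`. -/
theorem cosamp_selection_condition
    {m d K : ℕ} (A : Matrix (Fin m) (Fin d) ℝ) (xS : Fin d → ℝ) (e : Fin m → ℝ)
    (δ3 δ4 : ℝ)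
    (hRIP3 : RIP A (3 * K) δ3) (hRIP4 : RIP A (4 * K) δ4)
    (π : ℕ → Fin d)
    (hπinj : ∀ i j, i < K → j < K → π i = π j → i = j)
    (hπsupp : supp xS ⊆ (Finset.range K).image π)
    (hπsort : ∀ i j, i ≤ j → j < K → |xS (π j)| ≤ |xS (π i)|)
    (p q : ℕ) (hq : 1 ≤ p + q) (hpqK : p + q ≤ K)
    (U : Finset (Fin d)) (hUcard : U.card ≤ 3 * K)
    (hUπ : ∀ i < p + q, π i ∈ U)
    (u : Fin d → ℝ) (hLS : LeastSq A (A.mulVec xS + e) U u)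
    (hgap : Real.sqrt 2 * δ4 / Real.sqrt (1 - δ4 ^ 2) * euclNorm (restrict xS Uᶜ) +
        Real.sqrt 2 * (Real.sqrt (1 + δ3) / (1 - δ4)) * euclNorm e <
      |xS (π (p + q - 1))|) :
    ∀ j < p + q, ∀ i ∈ U \ supp xS, |u i| < |u (π j)| :=
  cosamp_selection_condition_general A xS e δ3 δ4 hRIP3 hRIP4 π hπsupp hπsort p q hpqK U hUcard hUπ
    u hLS hgap
end
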